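/- Let X = (X₁,…,Xₙ) be a square-integrable random vector on a probability space with mean E[Xᵢ] = (Fβ)ᵢ for some β ∈ ℝᵏ and covariances Cov(Xᵢ, Xⱼ) = Σᵢⱼ where Σ = σ₀²I_n + VDV'. Then for each j ∈ {1,…,l}, the BLUP natural estimator σ̂ⱼ² = ((T̂X)ⱼ)² satisfies E[((T̂X)ⱼ)²] = σⱼ² − σ₀²(Ŵ⁻¹)ⱼⱼ; in particular its bias is −σ₀²(Ŵ⁻¹)ⱼⱼ. -/

import Mathlib

/-!
Because `M_F F = 0`, the estimator `T̂X` equals `T̂(X - Fβ)`, so `E[((T̂X)ⱼ)²]` is the `(j, j)`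
entry of `T̂ΣT̂'`. With `A = V'M_F V` and `M_F` a symmetric idempotent, `T̂ΣT̂' = Ŵ⁻¹(σ₀²A + ADA)Ŵ⁻¹`;
the identity `σ₀²A + ADA = ADŴ` collapses this to `Ŵ⁻¹AD`, and substituting `A = Ŵ - σ₀²D⁻¹`
gives `D - σ₀²Ŵ⁻¹`.
-/

open Matrix MeasureTheory

theorem Matrix.linearIndependent_col_of_rank_eq {m k K : Type*} [Fintype k] [Field K]
    {A : Matrix m k K} (hA : A.rank = Fintype.card k) : LinearIndependent K A.col := by
  rw [linearIndependent_iff_card_eq_finrank_span, ← hA, rank_eq_finrank_span_cols]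
  rfl

theorem Matrix.mulVec_injective_of_rank_fromCols {m k l K : Type*} [Fintype m] [Fintype k]
    [Fintype l] [Field K] {F : Matrix m k K} {V : Matrix m l K}
    (h : (fromCols F V).rank = Fintype.card k + Fintype.card l) : Function.Injective F.mulVec := by
  rw [mulVec_injective_iff]
  exact (linearIndependent_col_of_rank_eq (h.trans Fintype.card_sum.symm)).comp Sum.inl
    Sum.inl_injective

theorem Matrix.isUnit_det_transpose_mul_self {m k : Type*} [Fintype m] [Fintype k] [DecidableEq k]
    {F : Matrix m k ℝ} (hF : Function.Injective F.mulVec) : IsUnit (Fᵀ * F).det := by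
  rw [← isUnit_iff_isUnit_det, ← conjTranspose_eq_transpose_of_trivial]
  exact (PosDef.conjTranspose_mul_self F hF).isUnit

section ResidualMaker

variable {m k R : Type*} [Fintype m] [Fintype k] [DecidableEq m] [DecidableEq k] [CommRing R]

noncomputable def residualMaker (F : Matrix m k R) : Matrix m m R := 1 - F * (Fᵀ * F)⁻¹ * Fᵀ

variable {F : Matrix m k R}

theorem residualMaker_mul (hF : IsUnit (Fᵀ * F).det) : residualMaker F * F = 0 := by
  rw [residualMaker, Matrix.sub_mul, Matrix.one_mul, Matrix.mul_assoc _ Fᵀ, Matrix.mul_assoc F,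
    nonsing_inv_mul _ hF, Matrix.mul_one, sub_self]

theorem transpose_residualMaker (F : Matrix m k R) : (residualMaker F)ᵀ = residualMaker F := by
  simp [residualMaker, transpose_nonsing_inv, Matrix.mul_assoc]

theorem residualMaker_mul_self (hF : IsUnit (Fᵀ * F).det) :
    residualMaker F * residualMaker F = residualMaker F := by
  conv_lhs => arg 2; rw [residualMaker]
  rw [Matrix.mul_sub, Matrix.mul_one, ← Matrix.mul_assoc, ← Matrix.mul_assoc, residualMaker_mul hF,
    Matrix.zero_mul, Matrix.zero_mul, sub_zero]

end ResidualMaker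

theorem posSemidef_residualMaker {m k : Type*} [Fintype m] [Fintype k] [DecidableEq m]
    [DecidableEq k] {F : Matrix m k ℝ} (hF : IsUnit (Fᵀ * F).det) :
    (residualMaker F).PosSemidef := by
  have h := posSemidef_conjTranspose_mul_self (residualMaker F)
  rwa [conjTranspose_eq_transpose_of_trivial, transpose_residualMaker,
    residualMaker_mul_self hF] at h

section Sandwich

variable {n p R : Type*} [Fintype n] [Fintype p] [DecidableEq n] [CommRing R]

theorem transpose_mul_smul_one_add_mul_mul_mul {M : Matrix n n R} (hMM : M * M = M)
    (V : Matrix n p R) (D : Matrix p p R) (s : R) :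
    Vᵀ * M * (s • 1 + V * D * Vᵀ) * (M * V) =
      s • (Vᵀ * M * V) + Vᵀ * M * V * D * (Vᵀ * M * V) := by
  simp only [Matrix.mul_add, Matrix.add_mul, Matrix.mul_smul, Matrix.smul_mul, Matrix.mul_one,
    Matrix.mul_assoc]
  rw [← Matrix.mul_assoc M M V, hMM]

variable [DecidableEq p]

theorem inv_mul_smul_add_mul_mul_mul_inv {A D : Matrix p p R} {s : R} (hD : IsUnit D.det)
    (hW : IsUnit (A + s • D⁻¹).det) :
    (A + s • D⁻¹)⁻¹ * (s • A + A * D * A) * (A + s • D⁻¹)⁻¹ = D - s • (A + s • D⁻¹)⁻¹ := by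
  set W := A + s • D⁻¹
  have hADW : s • A + A * D * A = A * D * W := by
    rw [Matrix.mul_add, Matrix.mul_smul, Matrix.mul_assoc A D D⁻¹, mul_nonsing_inv _ hD,
      Matrix.mul_one, add_comm]
  have hA : A = W - s • D⁻¹ := (add_sub_cancel_right A _).symm
  calc W⁻¹ * (s • A + A * D * A) * W⁻¹ = W⁻¹ * A * D := by
        rw [hADW]
        simp only [Matrix.mul_assoc, mul_nonsing_inv _ hW, Matrix.mul_one]
    _ = D - s • W⁻¹ := by
        conv_lhs => rw [hA]
        rw [Matrix.mul_sub, Matrix.sub_mul, nonsing_inv_mul _ hW, Matrix.one_mul, Matrix.mul_smul,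
          Matrix.smul_mul, Matrix.mul_assoc, nonsing_inv_mul _ hD, Matrix.mul_one]

theorem mul_smul_one_add_mul_mul_transpose_eq {M : Matrix n n R} (hMT : Mᵀ = M)
    (hMM : M * M = M) {V : Matrix n p R} {D W : Matrix p p R} {s : R} (hD : IsUnit D.det)
    (hW : IsUnit W.det) (hWT : Wᵀ = W) (hWA : W = Vᵀ * M * V + s • D⁻¹) :
    (W⁻¹ * Vᵀ * M) * (s • 1 + V * D * Vᵀ) * (W⁻¹ * Vᵀ * M)ᵀ = D - s • W⁻¹ := by
  have hTT : (W⁻¹ * Vᵀ * M)ᵀ = M * V * W⁻¹ := by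
    rw [transpose_mul, transpose_mul, transpose_nonsing_inv, hWT, hMT, transpose_transpose,
      Matrix.mul_assoc]
  subst hWA
  rw [hTT, ← inv_mul_smul_add_mul_mul_mul_inv hD hW, ← transpose_mul_smul_one_add_mul_mul_mul hMM]
  simp only [Matrix.mul_assoc]

end Sandwich

theorem posDef_transpose_mul_mul_add_smul_inv {n p : Type*} [Fintype n] [Fintype p]
    [DecidableEq p] {M : Matrix n n ℝ} (hM : M.PosSemidef) (V : Matrix n p ℝ)
    {D : Matrix p p ℝ} (hD : D.PosDef) {s : ℝ} (hs : 0 < s) :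
    (Vᵀ * M * V + s • D⁻¹).PosDef := by
  simpa only [conjTranspose_eq_transpose_of_trivial] using
    PosDef.posSemidef_add (hM.conjTranspose_mul_mul_same V) (hD.inv.smul hs)

theorem integral_mulVec_apply_mul_mulVec_apply {ι κ Ω : Type*} [Fintype ι] [MeasurableSpace Ω]
    {μ : Measure Ω} {Y : Ω → ι → ℝ} (hY : ∀ i, MemLp (fun ω => Y ω i) 2 μ) {S : Matrix ι ι ℝ}
    (hS : ∀ i i', ∫ ω, Y ω i * Y ω i' ∂μ = S i i') (T : Matrix κ ι ℝ) (j j' : κ) :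
    ∫ ω, (T *ᵥ Y ω) j * (T *ᵥ Y ω) j' ∂μ = (T * S * Tᵀ) j j' := by
  have hint : ∀ i i', Integrable (fun ω => T j i * T j' i' * (Y ω i * Y ω i')) μ :=
    fun i i' => ((hY i).integrable_mul (hY i')).const_mul _
  calc ∫ ω, (T *ᵥ Y ω) j * (T *ᵥ Y ω) j' ∂μ
      = ∫ ω, ∑ i, ∑ i', T j i * T j' i' * (Y ω i * Y ω i') ∂μ := by
        congr 1 with ω
        simp only [mulVec, dotProduct, Finset.sum_mul_sum]
        exact Finset.sum_congr rfl fun i _ => Finset.sum_congr rfl fun i' _ => by ring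
    _ = ∑ i, ∑ i', T j i * T j' i' * S i i' := by
        rw [integral_finsetSum _ fun i _ => integrable_finsetSum _ fun i' _ => hint i i']
        refine Finset.sum_congr rfl fun i _ => ?_
        rw [integral_finsetSum _ fun i' _ => hint i i']
        simp only [integral_const_mul, hS]
    _ = (T * S * Tᵀ) j j' := by
        simp only [mul_apply, transpose_apply, Finset.sum_mul]
        rw [Finset.sum_comm]
        exact Finset.sum_congr rfl fun i _ => Finset.sum_congr rfl fun i' _ => by ring

theorem stmt_7_general {n k l : ℕ}
    (F : Matrix (Fin n) (Fin k) ℝ) (V : Matrix (Fin n) (Fin l) ℝ)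
    (hrank : (Matrix.fromCols F V).rank = k + l)
    (σ0 : ℝ) (hσ0 : 0 < σ0)
    (σ : Fin l → ℝ) (hσ : ∀ j, 0 < σ j)
    (D : Matrix (Fin l) (Fin l) ℝ) (hD : D = Matrix.diagonal σ)
    (Mf : Matrix (Fin n) (Fin n) ℝ) (hMf : Mf = 1 - F * (Fᵀ * F)⁻¹ * Fᵀ)
    (What : Matrix (Fin l) (Fin l) ℝ) (hWhat : What = Vᵀ * Mf * V + σ0 • D⁻¹)
    (That : Matrix (Fin l) (Fin n) ℝ) (hThat : That = What⁻¹ * Vᵀ * Mf)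
    (Sigma : Matrix (Fin n) (Fin n) ℝ)
    (hSigma : Sigma = σ0 • (1 : Matrix (Fin n) (Fin n) ℝ) + V * D * Vᵀ)
    (Ω : Type) [MeasurableSpace Ω] (μ : Measure Ω) [IsProbabilityMeasure μ]
    (X : Ω → Fin n → ℝ)
    (hX2 : ∀ i, MemLp (fun ω => X ω i) 2 μ)
    (β : Fin k → ℝ)
    (hcov : ∀ i i', ∫ ω, (X ω i - F.mulVec β i) * (X ω i' - F.mulVec β i') ∂μ
      = Sigma i i') :
    ∀ j : Fin l,
      (∫ ω, (That.mulVec (X ω) j) ^ 2 ∂μ = σ j - σ0 * What⁻¹ j j) ∧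
      ((∫ ω, (That.mulVec (X ω) j) ^ 2 ∂μ) - σ j = -(σ0 * What⁻¹ j j)) := by
  have hF : IsUnit (Fᵀ * F).det :=
    isUnit_det_transpose_mul_self (mulVec_injective_of_rank_fromCols (V := V) (by simpa))
  replace hMf : Mf = residualMaker F := hMf
  have hDpos : D.PosDef := hD ▸ PosDef.diagonal hσ
  have hWpos : What.PosDef :=
    hWhat ▸ posDef_transpose_mul_mul_add_smul_inv (hMf ▸ posSemidef_residualMaker hF) V hDpos hσ0
  have hcovT : That * Sigma * Thatᵀ = D - σ0 • What⁻¹ := by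
    rw [hThat, hSigma, hMf]
    refine mul_smul_one_add_mul_mul_transpose_eq (transpose_residualMaker F)
      (residualMaker_mul_self hF) ((isUnit_iff_isUnit_det _).mp hDpos.isUnit)
      ((isUnit_iff_isUnit_det _).mp hWpos.isUnit) ?_ (hMf ▸ hWhat)
    simpa only [conjTranspose_eq_transpose_of_trivial] using hWpos.isHermitian.eq
  have hTX : ∀ ω, That *ᵥ X ω = That *ᵥ (X ω - F *ᵥ β) := fun ω => by
    rw [mulVec_sub, mulVec_mulVec, hThat, Matrix.mul_assoc _ Mf, hMf, residualMaker_mul hF,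
      Matrix.mul_zero, zero_mulVec, sub_zero]
  intro j
  have hbias : ∫ ω, (That *ᵥ X ω) j ^ 2 ∂μ = σ j - σ0 * What⁻¹ j j := by
    simp_rw [sq, hTX]
    rw [integral_mulVec_apply_mul_mulVec_apply (Y := fun ω => X ω - F *ᵥ β)
      (fun i => (hX2 i).sub (memLp_const _)) hcov, hcovT, hD]
    simp
  exact ⟨hbias, by rw [hbias]; ring⟩

/-- Mean (and hence bias) of the BLUP natural estimator `σ̂ⱼ² = ((T̂X)ⱼ)²`:
for a square-integrable random vector `X` with mean `Fβ` and covariance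
`Σ = σ₀²I_n + VDV'`, `E[((T̂X)ⱼ)²] = σⱼ² − σ₀²(Ŵ⁻¹)ⱼⱼ`, so the bias is
`−σ₀²(Ŵ⁻¹)ⱼⱼ`. -/
theorem stmt_7 {n k l : ℕ} (hn : 0 < n) (hk : 0 < k) (hl : 0 < l)
    (hnkl : k + l < n)
    (F : Matrix (Fin n) (Fin k) ℝ) (V : Matrix (Fin n) (Fin l) ℝ)
    (hrank : (Matrix.fromCols F V).rank = k + l)
    (σ0 : ℝ) (hσ0 : 0 < σ0)
    (σ : Fin l → ℝ) (hσ : ∀ j, 0 < σ j)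
    (D : Matrix (Fin l) (Fin l) ℝ) (hD : D = Matrix.diagonal σ)
    (Mf : Matrix (Fin n) (Fin n) ℝ) (hMf : Mf = 1 - F * (Fᵀ * F)⁻¹ * Fᵀ)
    (What : Matrix (Fin l) (Fin l) ℝ) (hWhat : What = Vᵀ * Mf * V + σ0 • D⁻¹)
    (That : Matrix (Fin l) (Fin n) ℝ) (hThat : That = What⁻¹ * Vᵀ * Mf)
    (Sigma : Matrix (Fin n) (Fin n) ℝ)
    (hSigma : Sigma = σ0 • (1 : Matrix (Fin n) (Fin n) ℝ) + V * D * Vᵀ)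
    (Ω : Type) [MeasurableSpace Ω] (μ : Measure Ω) [IsProbabilityMeasure μ]
    (X : Ω → Fin n → ℝ) (hXmeas : ∀ i, Measurable fun ω => X ω i)
    (hX2 : ∀ i, MemLp (fun ω => X ω i) 2 μ)
    (β : Fin k → ℝ)
    (hmean : ∀ i, ∫ ω, X ω i ∂μ = F.mulVec β i)
    (hcov : ∀ i i', ∫ ω, (X ω i - F.mulVec β i) * (X ω i' - F.mulVec β i') ∂μ
      = Sigma i i') :
    ∀ j : Fin l,
      (∫ ω, (That.mulVec (X ω) j) ^ 2 ∂μ = σ j - σ0 * What⁻¹ j j) ∧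
      ((∫ ω, (That.mulVec (X ω) j) ^ 2 ∂μ) - σ j = -(σ0 * What⁻¹ j j)) :=
  stmt_7_general F V hrank σ0 hσ0 σ hσ D hD Mf hMf What hWhat That hThat Sigma hSigma Ω μ X hX2 β
    hcov
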